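/- Let R = k[x_1,...,x_d] with k a field of characteristic 0 and α ∈ Z_{≥0}^d. For the principal monomial ideal I = (x^α), the n-th differential power is the principal ideal I^⟨n⟩ = (∏_{i ∈ supp(α)} x_i^{α_i + n − 1}). -/

import Mathlib

/-- `IsDiffOp A n φ` says that the `A`-linear endomorphism `φ` of `R` is an
`A`-linear differential operator of order at most `n`. -/
def IsDiffOp (A : Type*) {R : Type*} [CommRing A] [CommRing R] [Algebra A R] :
    ℕ → (R →ₗ[A] R) → Prop
  | 0 => fun φ => ∃ r : R, φ = LinearMap.mulLeft A r
  | n + 1 => fun φ => ∀ a : R,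
      IsDiffOp A n (φ ∘ₗ LinearMap.mulLeft A a - LinearMap.mulLeft A a ∘ₗ φ)

theorem isDiffOp_comp_mulLeft (A : Type*) {R : Type*} [CommRing A] [CommRing R]
    [Algebra A R] (x : R) (n : ℕ) :
    ∀ φ : R →ₗ[A] R, IsDiffOp A n φ → IsDiffOp A n (φ ∘ₗ LinearMap.mulLeft A x) := by
  induction n with
  | zero =>
    rintro φ ⟨r, rfl⟩
    exact ⟨r * x, by ext y; simp [mul_assoc]⟩
  | succ n ih =>
    intro φ h a
    have h2 := ih _ (h a)
    have key : (φ ∘ₗ LinearMap.mulLeft A x) ∘ₗ LinearMap.mulLeft A a -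
        LinearMap.mulLeft A a ∘ₗ (φ ∘ₗ LinearMap.mulLeft A x) =
        (φ ∘ₗ LinearMap.mulLeft A a - LinearMap.mulLeft A a ∘ₗ φ) ∘ₗ LinearMap.mulLeft A x := by
      ext y
      simp [mul_left_comm]
    rw [key]
    exact h2

/-- The `n`-th differential power of an ideal `I` of the `A`-algebra `R`:
the set of `r ∈ R` such that `∂ r ∈ I` for every `A`-linear differential
operator `∂` of order at most `n - 1`. -/
def diffPow (A : Type*) {R : Type*} [CommRing A] [CommRing R] [Algebra A R]
    (n : ℕ) (I : Ideal R) : Ideal R where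
  carrier := {r | ∀ φ : R →ₗ[A] R, IsDiffOp A (n - 1) φ → φ r ∈ I}
  add_mem' := fun hx hy φ hφ => by simp [map_add]; exact I.add_mem (hx φ hφ) (hy φ hφ)
  zero_mem' := fun φ _ => by simpa using I.zero_mem
  smul_mem' := fun c x hx => by
    intro φ hφ
    have := hx (φ ∘ₗ LinearMap.mulLeft A c) (isDiffOp_comp_mulLeft A c _ φ hφ)
    simpa [smul_eq_mul] using this

/-!
Membership in the monomial ideal `(x^α)` is read off the exponents one variable at a time:
`(x^α) = ⋂ᵢ (x_i^{α_i})`. A differential operator of order `≤ m` maps `I^b` into `I^(b-m)`,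
because its commutator with multiplication by an element of `I` has order `≤ m - 1`; with
`I = (x_i)` this gives `⊇`. Conversely, if a term `x^β` of `f` has `β_i < α_i + n - 1`, then for
`j = min(β_i, n - 1)` the operator `∂_i^j` sends it to `β_i!/(β_i - j)! · x^{β - j e_i}`, which is
nonzero in characteristic `0`, is not cancelled by any other term, and has `x_i`-exponent `< α_i`.
-/

namespace IsDiffOp

variable {A R : Type*} [CommRing A] [CommRing R] [Algebra A R]

theorem succ {n : ℕ} {φ : R →ₗ[A] R} (hφ : IsDiffOp A n φ) : IsDiffOp A (n + 1) φ := by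
  induction n generalizing φ with
  | zero =>
    obtain ⟨r, rfl⟩ := hφ
    exact fun a => ⟨0, LinearMap.ext fun y => by simp [mul_left_comm]⟩
  | succ n ih => exact fun a => ih (hφ a)

theorem mono {m n : ℕ} {φ : R →ₗ[A] R} (hφ : IsDiffOp A m φ) (h : m ≤ n) :
    IsDiffOp A n φ := by
  induction n, h using Nat.le_induction with
  | base => exact hφ
  | succ n _ ih => exact ih.succ

theorem add {n : ℕ} {φ ψ : R →ₗ[A] R} (hφ : IsDiffOp A n φ) (hψ : IsDiffOp A n ψ) :
    IsDiffOp A n (φ + ψ) := by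
  induction n generalizing φ ψ with
  | zero =>
    obtain ⟨r, rfl⟩ := hφ
    obtain ⟨s, rfl⟩ := hψ
    exact ⟨r + s, LinearMap.ext fun y => by simp [add_mul]⟩
  | succ n ih =>
    intro a
    convert ih (hφ a) (hψ a) using 1
    simp only [LinearMap.add_comp, LinearMap.comp_add]
    abel

theorem mulLeft_comp {n : ℕ} {φ : R →ₗ[A] R} (hφ : IsDiffOp A n φ) (r : R) :
    IsDiffOp A n (LinearMap.mulLeft A r ∘ₗ φ) := by
  induction n generalizing φ with
  | zero =>
    obtain ⟨s, rfl⟩ := hφ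
    exact ⟨r * s, LinearMap.ext fun y => by simp⟩
  | succ n ih =>
    intro a
    convert ih (hφ a) using 1
    ext y
    simp only [LinearMap.sub_apply, LinearMap.comp_apply, LinearMap.mulLeft_apply, map_sub]
    ring

theorem comp {m n : ℕ} {φ ψ : R →ₗ[A] R} (hφ : IsDiffOp A m φ) (hψ : IsDiffOp A n ψ) :
    IsDiffOp A (m + n) (φ ∘ₗ ψ) := by
  induction n generalizing m φ ψ with
  | zero =>
    obtain ⟨r, rfl⟩ := hψ
    exact isDiffOp_comp_mulLeft A r m φ hφ
  | succ n ihn =>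
    induction m generalizing φ with
    | zero =>
      obtain ⟨r, rfl⟩ := hφ
      rw [zero_add]
      exact hψ.mulLeft_comp r
    | succ m ihm =>
      intro a
      show IsDiffOp A (m + 1 + n) _
      have hcomm : (φ ∘ₗ ψ) ∘ₗ LinearMap.mulLeft A a - LinearMap.mulLeft A a ∘ₗ (φ ∘ₗ ψ) =
          (φ ∘ₗ LinearMap.mulLeft A a - LinearMap.mulLeft A a ∘ₗ φ) ∘ₗ ψ +
            φ ∘ₗ (ψ ∘ₗ LinearMap.mulLeft A a - LinearMap.mulLeft A a ∘ₗ ψ) := by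
        ext y
        simp only [LinearMap.sub_apply, LinearMap.add_apply, LinearMap.comp_apply,
          LinearMap.mulLeft_apply, map_sub]
        abel
      rw [hcomm]
      exact ((ihm (hφ a)).mono (by omega)).add ((ihn hφ (hψ a)).mono (by omega))

theorem map_mem_pow {m b : ℕ} {φ : R →ₗ[A] R} (hφ : IsDiffOp A m φ) {I : Ideal R} {f : R}
    (hf : f ∈ I ^ b) : φ f ∈ I ^ (b - m) := by
  induction m generalizing b φ f with
  | zero =>
    obtain ⟨r, rfl⟩ := hφ
    simpa using (I ^ b).mul_mem_left r hf
  | succ m ihm =>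
    induction b generalizing f with
    | zero => simp
    | succ b ihb =>
      rw [pow_succ'] at hf
      refine Submodule.mul_induction_on hf (fun x hx g hg => ?_)
        (fun _ _ hx hy => by rw [map_add]; exact add_mem hx hy)
      have hφxg : φ (x * g) =
          (φ ∘ₗ LinearMap.mulLeft A x - LinearMap.mulLeft A x ∘ₗ φ) g + x * φ g := by
        simp
      have hxφg : x * φ g ∈ I ^ (b - m) :=
        Ideal.pow_le_pow_right (show b - m ≤ b - (m + 1) + 1 by omega)
          (by rw [pow_succ']; exact Ideal.mul_mem_mul hx (ihb hg))
      rw [hφxg, Nat.add_sub_add_right]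
      exact add_mem (ihm (hφ x) hg) hxφg

end IsDiffOp

theorem mem_diffPow {A R : Type*} [CommRing A] [CommRing R] [Algebra A R] {n : ℕ}
    {I : Ideal R} {r : R} :
    r ∈ diffPow A n I ↔ ∀ φ : R →ₗ[A] R, IsDiffOp A (n - 1) φ → φ r ∈ I :=
  Iff.rfl

namespace MvPolynomial

variable {k σ : Type*} [CommRing k]

theorem mem_span_X_pow_iff {i : σ} {c : ℕ} {p : MvPolynomial σ k} :
    p ∈ Ideal.span {X i ^ c} ↔ ∀ β ∈ p.support, c ≤ β i := by
  have := mem_ideal_span_monomial_image (x := p) (s := {Finsupp.single i c})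
  simpa [X_pow_eq_monomial, Finsupp.single_le_iff] using this

theorem mem_span_monomial_one_iff {A : σ →₀ ℕ} {p : MvPolynomial σ k} :
    p ∈ Ideal.span {monomial A (1 : k)} ↔ ∀ i, p ∈ Ideal.span {X i ^ A i} := by
  have := mem_ideal_span_monomial_image (x := p) (s := {A})
  simp only [Set.image_singleton, Set.mem_singleton_iff, exists_eq_left] at this
  simp only [this, mem_span_X_pow_iff, Finsupp.le_def]
  exact ⟨fun h i β hβ => h β hβ i, fun h β hβ i => h i β hβ⟩

theorem prod_X_pow_eq_monomial_equivFunOnFinite [Fintype σ] (f : σ → ℕ) :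
    ∏ i, (X i : MvPolynomial σ k) ^ f i = monomial (Finsupp.equivFunOnFinite.symm f) 1 := by
  rw [monomial_eq, C_1, one_mul, Finsupp.prod_fintype _ _ fun _ => pow_zero _]
  rfl

theorem isDiffOp_pderiv (i : σ) : IsDiffOp k 1 (pderiv i : Derivation k _ _).toLinearMap :=
  fun a => ⟨pderiv i a, LinearMap.ext fun f => by simp; ring⟩

theorem isDiffOp_pderiv_pow (i : σ) (j : ℕ) :
    IsDiffOp k j ((pderiv i : Derivation k _ _).toLinearMap ^ j) := by
  induction j with
  | zero => exact ⟨1, LinearMap.ext fun f => by simp⟩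
  | succ j ih => rw [pow_succ]; exact ih.comp (isDiffOp_pderiv i)

theorem pderiv_pow_monomial (i : σ) (j : ℕ) (s : σ →₀ ℕ) (a : k) :
    ((pderiv i : Derivation k _ _).toLinearMap ^ j) (monomial s a) =
      monomial (s - Finsupp.single i j) (a * (s i).descFactorial j) := by
  induction j with
  | zero => simp
  | succ j ih =>
    rw [pow_succ', Module.End.mul_apply, ih, Derivation.coeFn_coe, pderiv_monomial,
      tsub_tsub, ← Finsupp.single_add, Finsupp.tsub_apply, Finsupp.single_eq_same,
      Nat.descFactorial_succ]
    push_cast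
    ring_nf

theorem coeff_pderiv_pow (i : σ) {j : ℕ} {β : σ →₀ ℕ} (hj : j ≤ β i) (f : MvPolynomial σ k) :
    coeff (β - Finsupp.single i j) (((pderiv i : Derivation k _ _).toLinearMap ^ j) f) =
      coeff β f * (β i).descFactorial j := by
  classical
  induction f using MvPolynomial.induction_on' with
  | monomial s a =>
    rw [pderiv_pow_monomial, coeff_monomial, coeff_monomial]
    by_cases hs : s = β
    · simp [hs]
    by_cases hsi : j ≤ s i
    · have : s - Finsupp.single i j ≠ β - Finsupp.single i j := by
        rwa [Ne, tsub_left_inj (Finsupp.single_le_iff.mpr hsi) (Finsupp.single_le_iff.mpr hj)]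
      simp [hs, this]
    · simp [hs, Nat.descFactorial_eq_zero_iff_lt.mpr (not_le.mp hsi)]
  | add p q hp hq => simp [hp, hq, add_mul]

section CharZero

variable [NoZeroDivisors k] [CharZero k]

theorem mem_span_X_pow_add_of_pderiv_pow_mem {i : σ} {a m : ℕ} (ha : a ≠ 0)
    {f : MvPolynomial σ k}
    (hf : ∀ j ≤ m, ((pderiv i : Derivation k _ _).toLinearMap ^ j) f ∈ Ideal.span {X i ^ a}) :
    f ∈ Ideal.span {X i ^ (a + m)} := by
  rw [mem_span_X_pow_iff]
  intro β hβ
  set j := min (β i) m with hj_def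
  have hβj : β - Finsupp.single i j ∈ (((pderiv i).toLinearMap ^ j) f).support := by
    rw [mem_support_iff, coeff_pderiv_pow i (min_le_left _ _)]
    refine mul_ne_zero (mem_support_iff.mp hβ) (Nat.cast_ne_zero.mpr ?_)
    exact Nat.descFactorial_eq_zero_iff_lt.not.mpr (not_lt.mpr (min_le_left _ _))
  have hle := mem_span_X_pow_iff.mp (hf j (min_le_right _ _)) _ hβj
  rw [Finsupp.tsub_apply, Finsupp.single_eq_same] at hle
  omega

theorem diffPow_span_monomial (A : σ →₀ ℕ) {n : ℕ} (hn : 0 < n) :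
    diffPow k n (Ideal.span {monomial A (1 : k)}) =
      Ideal.span
        {monomial (A.mapRange (fun a => if a = 0 then 0 else a + n - 1) (by simp)) 1} := by
  set B := A.mapRange (fun a => if a = 0 then 0 else a + n - 1) (by simp) with hB
  apply le_antisymm
  · intro f hf
    rw [mem_span_monomial_one_iff]
    intro i
    rw [hB, Finsupp.mapRange_apply]
    split_ifs with hAi
    · simp
    · rw [show A i + n - 1 = A i + (n - 1) by omega]
      exact mem_span_X_pow_add_of_pderiv_pow_mem hAi fun j hj =>
        mem_span_monomial_one_iff.mp (hf _ ((isDiffOp_pderiv_pow i j).mono hj)) i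
  · rw [Ideal.span_le, Set.singleton_subset_iff, SetLike.mem_coe, mem_diffPow]
    intro φ hφ
    rw [mem_span_monomial_one_iff]
    intro i
    have hBi : B i - (n - 1) = A i := by
      rw [hB, Finsupp.mapRange_apply]
      split_ifs <;> omega
    have hmem : monomial B (1 : k) ∈ Ideal.span {X i} ^ B i := by
      rw [Ideal.span_singleton_pow]
      exact mem_span_monomial_one_iff.mp (Ideal.mem_span_singleton_self _) i
    simpa only [Ideal.span_singleton_pow, hBi] using hφ.map_mem_pow hmem

end CharZero

end MvPolynomial

/-- The `n`-th differential power of the principal monomial ideal `(x^α)` is the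
principal ideal generated by `∏_{i ∈ supp α} x_i^{α_i + n − 1}`. -/
theorem diffPow_principal_monomial {k : Type*} [Field k] [CharZero k] {d : ℕ}
    (α : Fin d → ℕ) (n : ℕ) (hn : 0 < n) :
    diffPow k n (Ideal.span {∏ i, (MvPolynomial.X i : MvPolynomial (Fin d) k) ^ α i}) =
      Ideal.span {∏ i ∈ Finset.univ.filter fun i => α i ≠ 0,
        (MvPolynomial.X i : MvPolynomial (Fin d) k) ^ (α i + n - 1)} := by
  have hsupp : ∏ i ∈ Finset.univ.filter fun i => α i ≠ 0,
      (MvPolynomial.X i : MvPolynomial (Fin d) k) ^ (α i + n - 1) =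
        ∏ i, MvPolynomial.X i ^ (if α i = 0 then 0 else α i + n - 1) := by
    rw [Finset.prod_filter]
    refine Finset.prod_congr rfl fun i _ => ?_
    split_ifs <;> simp_all
  rw [hsupp, MvPolynomial.prod_X_pow_eq_monomial_equivFunOnFinite,
    MvPolynomial.prod_X_pow_eq_monomial_equivFunOnFinite, MvPolynomial.diffPow_span_monomial _ hn]
  congr
  ext i
  simp
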